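/- arXiv:2201.09414 — 3 statements merged into one kernel-verified Lean document; each statement's English description precedes it below -/
import Mathlib

section
/- The function f_s(x,y) = xy(2 − 2y + xy)/(1 − y + xy)² is strictly increasing in x on (0,1] for any fixed y ∈ (0,1), and strictly increasing in y on (0,1) for any fixed x ∈ (0,1]. Moreover f_s(0,y) = f_s(x,0) = 0. -/
/-! Since `xy(2 - 2y + xy) = (1 - y + xy)² - (1 - y)²`, putting `t = y / (1 - y)` gives
`f_s(x, y) = 1 - (1 + x t)⁻²`, a strictly increasing function of `x t ≥ 0`. The product `x t`
is strictly increasing in `x` when `t > 0`, and in `y` on `(0, 1)` when `x > 0`, because `t` is. -/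

open Set

lemma strictMonoOn_one_sub_inv_one_add_sq :
    StrictMonoOn (fun s : ℝ => 1 - ((1 + s) ^ 2)⁻¹) (Ici 0) := by
  intro a (ha : 0 ≤ a) b _ hab
  dsimp only
  gcongr

lemma strictMonoOn_div_one_sub : StrictMonoOn (fun y : ℝ => y / (1 - y)) (Iio 1) := by
  intro a (ha : a < 1) b (hb : b < 1) hab
  dsimp only
  rw [div_lt_div_iff₀ (by linarith) (by linarith)]
  linarith

lemma div_sq_eq_one_sub_inv_one_add_mul_sq {x y : ℝ} (hx : 0 ≤ x) (hy₀ : 0 ≤ y) (hy₁ : y < 1) :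
    x * y * (2 - 2 * y + x * y) / (1 - y + x * y) ^ 2 = 1 - ((1 + x * (y / (1 - y))) ^ 2)⁻¹ := by
  have h₁ : 1 - y ≠ 0 := by linarith
  have h₂ : 1 - y + x * y ≠ 0 := by nlinarith
  field_simp
  ring

/-- f_s(x,y) = xy(2-2y+xy)/(1-y+xy)² is strictly increasing in x on
(0,1] for fixed y ∈ (0,1), strictly increasing in y on (0,1) for fixed
x ∈ (0,1], and f_s(0,y) = f_s(x,0) = 0. -/
theorem stmt7 :
    let fs : ℝ → ℝ → ℝ := fun x y => x * y * (2 - 2 * y + x * y) / (1 - y + x * y) ^ 2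
    (∀ y ∈ Set.Ioo (0:ℝ) 1, StrictMonoOn (fun x => fs x y) (Set.Ioc (0:ℝ) 1))
    ∧ (∀ x ∈ Set.Ioc (0:ℝ) 1, StrictMonoOn (fun y => fs x y) (Set.Ioo (0:ℝ) 1))
    ∧ (∀ y : ℝ, fs 0 y = 0) ∧ (∀ x : ℝ, fs x 0 = 0) := by
  intro fs
  refine ⟨fun y hy a ha b hb hab => ?_, fun x hx a ha b hb hab => ?_,
    fun y => by simp [fs], fun x => by simp [fs]⟩
  · have ht : 0 < y / (1 - y) := div_pos hy.1 (sub_pos.2 hy.2)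
    simp only [fs, div_sq_eq_one_sub_inv_one_add_mul_sq ha.1.le hy.1.le hy.2,
      div_sq_eq_one_sub_inv_one_add_mul_sq hb.1.le hy.1.le hy.2]
    exact strictMonoOn_one_sub_inv_one_add_sq (mem_Ici.2 (mul_nonneg ha.1.le ht.le))
      (mem_Ici.2 (mul_nonneg hb.1.le ht.le)) (mul_lt_mul_of_pos_right hab ht)
  · simp only [fs, div_sq_eq_one_sub_inv_one_add_mul_sq hx.1.le ha.1.le ha.2,
      div_sq_eq_one_sub_inv_one_add_mul_sq hx.1.le hb.1.le hb.2]
    have ht : ∀ y ∈ Ioo (0 : ℝ) 1, 0 ≤ x * (y / (1 - y)) := fun y hy =>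
      mul_nonneg hx.1.le (div_nonneg hy.1.le (sub_pos.2 hy.2).le)
    exact strictMonoOn_one_sub_inv_one_add_sq (mem_Ici.2 (ht a ha)) (mem_Ici.2 (ht b hb))
      (mul_lt_mul_of_pos_left (strictMonoOn_div_one_sub ha.2 hb.2 hab) hx.1)
end

section
/- For integer q ≥ 2, the point x* = 4q(q−1)/(2q−1)² satisfies 0 < x* < 1, and a(x*) = (x*)^{2q−2}(2q/(2q−1) − x*) satisfies 2q·a(x*) − 1 ≤ 1/q. -/
/-!
Write `x* = 1 - t` with `t = 1/(2q-1)²`; then `2q/(2q-1) - x* = 2q t`. Bernoulli's inequality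
for `(1 + t)^n`, together with `(1 - t)^n (1 + t)^n = (1 - t²)^n ≤ 1`, gives
`(1 - t)^n (1 + n t) ≤ 1`. For `n = 2q - 2` one has `1 + n t = (4q² - 2q - 1) t`, hence
`2q·a(x*) = 4q² t (1 - t)^n ≤ 4q²/(4q² - 2q - 1)`, and this is at most `1 + 1/q` because
`2q² - 3q - 1 ≥ 0` for `q ≥ 2`.
-/

theorem one_sub_pow_mul_one_add_mul_le_one {t : ℝ} (ht₀ : 0 ≤ t) (ht₁ : t ≤ 1) (n : ℕ) :
    (1 - t) ^ n * (1 + n * t) ≤ 1 :=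
  calc (1 - t) ^ n * (1 + n * t)
      ≤ (1 - t) ^ n * (1 + t) ^ n :=
        mul_le_mul_of_nonneg_left (one_add_mul_le_pow (by linarith) n) (by positivity [sub_nonneg.2 ht₁])
    _ = (1 - t ^ 2) ^ n := by rw [← mul_pow]; ring
    _ ≤ 1 := pow_le_one₀ (by nlinarith) (by nlinarith)

noncomputable def xStar (q : ℝ) : ℝ := 4 * q * (q - 1) / (2 * q - 1) ^ 2

section xStar

variable {q : ℝ}

theorem xStar_eq_one_sub (hq : 2 * q - 1 ≠ 0) : xStar q = 1 - 1 / (2 * q - 1) ^ 2 := by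
  rw [xStar, eq_sub_iff_add_eq, ← add_div, div_eq_one_iff_eq (pow_ne_zero 2 hq)]; ring

theorem div_sub_xStar (hq : 2 * q - 1 ≠ 0) :
    2 * q / (2 * q - 1) - xStar q = 2 * q / (2 * q - 1) ^ 2 := by
  rw [xStar, div_sub_div _ _ hq (pow_ne_zero 2 hq),
    div_eq_div_iff (mul_ne_zero hq (pow_ne_zero 2 hq)) (pow_ne_zero 2 hq)]
  ring

theorem xStar_pos (hq : 1 < q) : 0 < xStar q := by
  have : 0 < 2 * q - 1 := by linarith
  unfold xStar
  positivity [sub_pos.2 hq]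

theorem xStar_lt_one (hq : 2 * q - 1 ≠ 0) : xStar q < 1 := by
  rw [xStar_eq_one_sub hq, sub_lt_self_iff]; positivity

theorem two_mul_xStar_pow_mul_le (hq : 1 ≤ q) {n : ℕ} (hn : (n : ℝ) = 2 * q - 2) :
    2 * q * (xStar q ^ n * (2 * q / (2 * q - 1) - xStar q)) ≤ 4 * q ^ 2 / (4 * q ^ 2 - 2 * q - 1) := by
  have hd : 1 ≤ (2 * q - 1) ^ 2 := by nlinarith
  have hd' : 2 * q - 1 ≠ 0 := by linarith
  have hd₀ : (2 * q - 1) ^ 2 ≠ 0 := pow_ne_zero 2 hd'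
  have hp : 0 < 4 * q ^ 2 - 2 * q - 1 := by nlinarith
  set t := 1 / (2 * q - 1) ^ 2 with ht
  have key : (1 - t) ^ n * (1 + n * t) ≤ 1 :=
    one_sub_pow_mul_one_add_mul_le_one (by positivity) (div_le_one_of_le₀ hd (by positivity)) n
  have ht_mul : (2 * q - 1) ^ 2 * t = 1 := mul_one_div_cancel hd₀
  have hnt : 1 + n * t = (4 * q ^ 2 - 2 * q - 1) * t := by
    rw [hn]; linear_combination -ht_mul
  rw [div_sub_xStar hd', xStar_eq_one_sub hd', ← ht, le_div_iff₀ hp]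
  calc 2 * q * ((1 - t) ^ n * (2 * q / (2 * q - 1) ^ 2)) * (4 * q ^ 2 - 2 * q - 1)
      = 4 * q ^ 2 * ((1 - t) ^ n * (1 + n * t)) := by rw [hnt, ht]; ring
    _ ≤ 4 * q ^ 2 := mul_le_of_le_one_right (by positivity) key

theorem four_mul_sq_div_le_one_add_one_div (hq : 2 ≤ q) :
    4 * q ^ 2 / (4 * q ^ 2 - 2 * q - 1) ≤ 1 + 1 / q := by
  have hp : 0 < 4 * q ^ 2 - 2 * q - 1 := by nlinarith
  have hq₀ : 0 < q := by linarith
  rw [div_le_iff₀ hp, one_add_div hq₀.ne', div_mul_eq_mul_div, le_div_iff₀ hq₀]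
  nlinarith

end xStar

/-- For integer q ≥ 2, x* = 4q(q−1)/(2q−1)² satisfies 0 < x* < 1,
and a(x*) = (x*)^{2q−2}(2q/(2q−1) − x*) satisfies 2q·a(x*) − 1 ≤ 1/q. -/
theorem stmt11 (q : ℕ) (hq : 2 ≤ q) :
    let xs : ℝ := 4 * (q : ℝ) * ((q : ℝ) - 1) / (2 * (q : ℝ) - 1) ^ 2
    let axs : ℝ := xs ^ (2 * q - 2) * (2 * (q : ℝ) / (2 * (q : ℝ) - 1) - xs)
    0 < xs ∧ xs < 1 ∧ 2 * (q : ℝ) * axs - 1 ≤ 1 / (q : ℝ) := by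
  intro xs axs
  have hq' : (2 : ℝ) ≤ q := by exact_mod_cast hq
  have hd : 2 * (q : ℝ) - 1 ≠ 0 := by linarith
  have hn : ((2 * q - 2 : ℕ) : ℝ) = 2 * q - 2 := by
    push_cast [Nat.cast_sub (by omega : 2 ≤ 2 * q)]; ring
  refine ⟨xStar_pos (by linarith), xStar_lt_one hd, ?_⟩
  change 2 * (q : ℝ) * (xStar q ^ (2 * q - 2) * (2 * q / (2 * q - 1) - xStar q)) - 1 ≤ 1 / q
  linarith [two_mul_xStar_pow_mul_le (by linarith) hn, four_mul_sq_div_le_one_add_one_div hq']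
end

section
/- Fix ρ ∈ (0,1) and define for a > 0 the function ε₂(a) = (−((1−ρ)/ρ·a+1) + √(((1−ρ)/ρ·a+1)² + 4a))/(2a). Then ε₂ is strictly decreasing in a on (0,∞). -/
/-! The root `x(a)` solves `a·x·(x + c) + x = 1` with `c = (1 - ρ)/ρ ≥ 0`. The left-hand side is
strictly increasing in `a` and nondecreasing in `x > 0`, so a larger `a` forces a smaller root. -/

/-- The positive root of `a x² + b x - 1 = 0` for `a > 0`. -/
noncomputable def quadPosRoot (a b : ℝ) : ℝ :=
  (-b + √(b ^ 2 + 4 * a)) / (2 * a)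

lemma quadPosRoot_pos {a : ℝ} (b : ℝ) (ha : 0 < a) : 0 < quadPosRoot a b := by
  have hlt : b < √(b ^ 2 + 4 * a) :=
    (le_abs_self b).trans_lt (Real.lt_sqrt_of_sq_lt (by rw [sq_abs]; linarith))
  exact div_pos (by linarith) (by positivity)

lemma quadPosRoot_isRoot {a : ℝ} (b : ℝ) (ha : 0 < a) :
    a * quadPosRoot a b ^ 2 + b * quadPosRoot a b = 1 := by
  have hs : √(b ^ 2 + 4 * a) ^ 2 = b ^ 2 + 4 * a := Real.sq_sqrt (by positivity)
  unfold quadPosRoot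
  generalize √(b ^ 2 + 4 * a) = s at hs ⊢
  field_simp
  linear_combination hs

lemma mul_sq_add_mul_lt {c a b x y : ℝ} (hc : 0 ≤ c) (ha : 0 < a) (hab : a < b)
    (hx : 0 < x) (hxy : x ≤ y) :
    a * x ^ 2 + (c * a + 1) * x < b * y ^ 2 + (c * b + 1) * y := by
  have hxc : 0 < x * (x + c) := by positivity
  calc a * x ^ 2 + (c * a + 1) * x = a * (x * (x + c)) + x := by ring
    _ < b * (x * (x + c)) + x := by gcongr
    _ ≤ b * (y * (y + c)) + y := by
      have hy : 0 ≤ y := hx.le.trans hxy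
      gcongr
      linarith
    _ = b * y ^ 2 + (c * b + 1) * y := by ring

/-- For fixed ρ ∈ (0,1), the function
ε₂(a) = (−((1−ρ)/ρ·a+1) + √(((1−ρ)/ρ·a+1)² + 4a))/(2a) is strictly decreasing
in a on (0,∞). -/
theorem stmt15 (ρ : ℝ) (hρ : ρ ∈ Set.Ioo (0:ℝ) 1) :
    StrictAntiOn
      (fun a : ℝ =>
        (-((1 - ρ) / ρ * a + 1) + Real.sqrt (((1 - ρ) / ρ * a + 1) ^ 2 + 4 * a)) / (2 * a))
      (Set.Ioi (0:ℝ)) := by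
  set c := (1 - ρ) / ρ
  have hc : 0 ≤ c := div_nonneg (by linarith [hρ.2]) hρ.1.le
  show StrictAntiOn (fun a => quadPosRoot a (c * a + 1)) _
  intro a (ha : 0 < a) b (hb : 0 < b) hab
  by_contra! hle
  have := mul_sq_add_mul_lt hc ha hab (quadPosRoot_pos _ ha) hle
  rw [quadPosRoot_isRoot _ ha, quadPosRoot_isRoot _ hb] at this
  exact this.false
end
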